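/- Let (X,d) be a metric space whose underlying set X is finite and nonempty. If (X,d) satisfies the three-point condition, then every vertex of the basic geodesic graph of (X,d) has degree at most 2: no point x ∈ X has three pairwise distinct points u,v,w, each different from x, such that {x,u}, {x,v}, and {x,w} are all basic edges. -/
import Mathlib


/-- A chain of intermediate points witnessing that the pair `{x, x'}` is non-basic:
`k ≥ 1` pairwise distinct intermediate points, each different from `x` and `x'`,
along which the distances sum to `dist x x'`. -/
def IsNonBasicChain {X : Type*} [MetricSpace X] (x x' : X) : Prop :=
  ∃ (k : ℕ) (p : Fin (k + 2) → X), 1 ≤ k ∧ Function.Injective p ∧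
    p 0 = x ∧ p (Fin.last (k + 1)) = x' ∧
    dist x x' = ∑ i : Fin (k + 1), dist (p i.castSucc) (p i.succ)

/-- The unordered pair `{x, x'}` is a non-basic edge. -/
def IsNonBasicEdge {X : Type*} [MetricSpace X] (x x' : X) : Prop :=
  IsNonBasicChain x x' ∨ IsNonBasicChain x' x

/-- The unordered pair `{x, x'}` is a basic edge. -/
def IsBasicEdge {X : Type*} [MetricSpace X] (x x' : X) : Prop :=
  x ≠ x' ∧ ¬ IsNonBasicEdge x x'

/-- The three-point condition. -/
def ThreePointCondition (X : Type*) [MetricSpace X] : Prop :=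
  ∀ x y z : X, max (dist x y) (max (dist y z) (dist z x)) =
    (dist x y + dist y z + dist z x) / 2

lemma chain_of_between {X : Type*} [MetricSpace X] {x y z : X}
    (hxy : x ≠ y) (hyz : y ≠ z) (hxz : x ≠ z)
    (h : dist x z = dist x y + dist y z) : IsNonBasicChain x z := by
  refine ⟨1, ![x, y, z], le_refl 1, ?_, rfl, rfl, ?_⟩
  · intro i j hij
    fin_cases i <;> fin_cases j <;> simp_all
  · simp [Fin.sum_univ_succ, h]

lemma three_cases {X : Type*} [MetricSpace X] (h3 : ThreePointCondition X) (a b c : X) :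
    dist a b = dist b c + dist c a ∨ dist b c = dist a b + dist c a ∨
      dist c a = dist a b + dist b c := by
  have h := h3 a b c
  rcases max_cases (dist a b) (max (dist b c) (dist c a)) with ⟨h1, _⟩ | ⟨h1, _⟩ <;>
    rw [h1] at h
  · left; linarith
  · rcases max_cases (dist b c) (dist c a) with ⟨h2, _⟩ | ⟨h2, _⟩ <;> rw [h2] at h
    · right; left; linarith
    · right; right; linarith

/-- If `{x,u}` and `{x,v}` are basic edges with `u ≠ v`, then `x` lies between `u` and `v`. -/
lemma between_of_basic {X : Type*} [MetricSpace X] (h3 : ThreePointCondition X)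
    {x u v : X} (huv : u ≠ v) (hu : IsBasicEdge x u) (hv : IsBasicEdge x v) :
    dist u v = dist u x + dist x v := by
  obtain ⟨hxu, hnu⟩ := hu
  obtain ⟨hxv, hnv⟩ := hv
  rcases three_cases h3 u x v with h | h | h
  · -- dist u x = dist x v + dist v u, i.e. v between x and u
    exfalso
    exact hnu (Or.inl (chain_of_between hxv (Ne.symm huv) hxu
      (by linarith [dist_comm u x, dist_comm v x, dist_comm v u])))
  · -- dist x v = dist u x + dist v u : u between x and v
    exfalso
    exact hnv (Or.inl (chain_of_between hxu huv hxv
      (by rw [dist_comm v u] at h; rw [dist_comm u x] at h; linarith)))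
  · -- dist v u = dist u x + dist x v
    rw [dist_comm v u] at h; exact h

/-- Under the three-point condition, every vertex of the basic geodesic graph has
degree at most 2. -/
theorem degree_le_two_of_threePointCondition
    {X : Type*} [MetricSpace X] [Fintype X] [Nonempty X]
    (h3 : ThreePointCondition X) :
    ¬ ∃ (x u v w : X), u ≠ v ∧ v ≠ w ∧ w ≠ u ∧
      u ≠ x ∧ v ≠ x ∧ w ≠ x ∧
      IsBasicEdge x u ∧ IsBasicEdge x v ∧ IsBasicEdge x w := by
  rintro ⟨x, u, v, w, huv, hvw, hwu, hux, hvx, hwx, hbu, hbv, hbw⟩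
  have h1 := between_of_basic h3 huv hbu hbv
  have h2 := between_of_basic h3 hvw hbv hbw
  have h3' := between_of_basic h3 hwu.symm hbu hbw
  have duv : dist u v = dist u x + dist x v := h1
  have dvw : dist v w = dist v x + dist x w := h2
  have duw : dist u w = dist u x + dist x w := h3'
  rcases three_cases h3 u v w with h | h | h
  · -- dist u v = dist v w + dist w u
    rw [duv, dvw, dist_comm w u, duw] at h
    exact hwx (dist_eq_zero.mp (by linarith [dist_comm v x, (dist_nonneg : (0:ℝ) ≤ dist w x), dist_comm w x]))
  · -- dist v w = dist u v + dist w u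
    rw [duv, dvw, dist_comm w u, duw] at h
    exact hux (dist_eq_zero.mp (by linarith [dist_comm v x, dist_comm u x]))
  · -- dist w u = dist u v + dist v w
    rw [duv, dvw, dist_comm w u, duw] at h
    exact hvx (dist_eq_zero.mp (by linarith [dist_comm v x, (dist_nonneg : (0:ℝ) ≤ dist v x), (dist_nonneg : (0:ℝ) ≤ dist x v)]))
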